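/- arXiv:1403.8089 — 3 statements merged into one kernel-verified Lean document; each statement's English description precedes it below -/
import Mathlib

section
/- For any map f : Y → X, one has secat(f) ≤ relcat(f) ≤ secat(f) + 1. -/
open ContinuousMap unitInterval

noncomputable section

universe u

/-! ## Double mapping cylinder (homotopy pushout) -/

inductive CylRel {A B P : Type u} (fa : P → A) (fb : P → B) :
    (A ⊕ (P × I) ⊕ B) → (A ⊕ (P × I) ⊕ B) → Prop
  | zero (p : P) : CylRel fa fb (.inr (.inl (p, 0))) (.inl (fa p))
  | one (p : P) : CylRel fa fb (.inr (.inl (p, 1))) (.inr (.inr (fb p)))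

/-- The double mapping cylinder, i.e. the homotopy pushout, of `A ←fa- P -fb→ B`. -/
def Cyl {A B P : Type u} [TopologicalSpace A] [TopologicalSpace B] [TopologicalSpace P]
    (fa : P → A) (fb : P → B) : Type u := Quot (CylRel fa fb)

instance {A B P : Type u} [TopologicalSpace A] [TopologicalSpace B] [TopologicalSpace P]
    (fa : P → A) (fb : P → B) : TopologicalSpace (Cyl fa fb) :=
  inferInstanceAs (TopologicalSpace (Quot _))

/-! ## Homotopy pullback and the fibrewise join of two maps -/

/-- The homotopy pullback of `α : A → C` and `β : B → C`. -/
def HPullback {A B C : Type u} [TopologicalSpace A] [TopologicalSpace B] [TopologicalSpace C]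
    (α : C(A, C)) (β : C(B, C)) : Type u :=
  {x : A × C(I, C) × B // x.2.1 0 = α x.1 ∧ x.2.1 1 = β x.2.2}

instance {A B C : Type u} [TopologicalSpace A] [TopologicalSpace B] [TopologicalSpace C]
    (α : C(A, C)) (β : C(B, C)) : TopologicalSpace (HPullback α β) :=
  inferInstanceAs (TopologicalSpace {x : A × C(I, C) × B // _})

/-- The join `A *_C B` of two maps `α : A → C`, `β : B → C`: the homotopy pushout of the
homotopy pullback of `α` and `β`. -/
def JoinSpace {A B C : Type u} [TopologicalSpace A] [TopologicalSpace B] [TopologicalSpace C]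
    (α : C(A, C)) (β : C(B, C)) : Type u :=
  Cyl (fun p : HPullback α β => p.1.1) (fun p : HPullback α β => p.1.2.2)

instance {A B C : Type u} [TopologicalSpace A] [TopologicalSpace B] [TopologicalSpace C]
    (α : C(A, C)) (β : C(B, C)) : TopologicalSpace (JoinSpace α β) :=
  inferInstanceAs (TopologicalSpace (Cyl _ _))

/-- The canonical map `A *_C B → C` induced by `α` and `β`. -/
def joinMap {A B C : Type u} [TopologicalSpace A] [TopologicalSpace B] [TopologicalSpace C]
    (α : C(A, C)) (β : C(B, C)) : C(JoinSpace α β, C) where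
  toFun := Quot.lift
    (Sum.elim α (Sum.elim (fun q : HPullback α β × I => q.1.1.2.1 q.2) β))
    (by rintro x y (⟨p⟩ | ⟨p⟩) <;> simp [p.2.1, p.2.2])
  continuous_toFun := by
    apply continuous_quot_lift
    apply Continuous.sumElim α.continuous
    apply Continuous.sumElim _ β.continuous
    exact (continuous_eval.comp
      ((continuous_subtype_val.comp continuous_fst).snd.fst.prodMk continuous_snd))

/-- Inclusion of the second factor `B → A *_C B`. -/
def joinInr {A B C : Type u} [TopologicalSpace A] [TopologicalSpace B] [TopologicalSpace C]
    (α : C(A, C)) (β : C(B, C)) : C(B, JoinSpace α β) where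
  toFun b := Quot.mk _ (.inr (.inr b))
  continuous_toFun := continuous_quot_mk.comp (continuous_inr.comp continuous_inr)

/-! ## Iterated joins, sectional category and relative category -/

/-- A space over `X`. -/
structure Fibw (X : Type u) [TopologicalSpace X] : Type (u + 1) where
  E : Type u
  [tE : TopologicalSpace E]
  p : @ContinuousMap E X tE _

attribute [instance] Fibw.tE

variable {X Y : Type u} [TopologicalSpace X] [TopologicalSpace Y]

/-- The `n`-th iterated join `j^n_f : *^n_X Y → X` of a map `f : Y → X`. -/
def iJoin (f : C(Y, X)) : ℕ → Fibw X
  | 0 => ⟨Y, f⟩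
  | n + 1 => ⟨JoinSpace (iJoin f n).p f, joinMap (iJoin f n).p f⟩

/-- The canonical map `ι_n : Y → *^n_X Y` (with `ι_0 = id`), satisfying `j^n_f ∘ ι_n = f`. -/
def iotaJoin (f : C(Y, X)) : (n : ℕ) → C(Y, (iJoin f n).E)
  | 0 => ContinuousMap.id Y
  | n + 1 => joinInr (iJoin f n).p f

/-- A map admits a homotopy section. -/
def HasHomotopySection {E B : Type u} [TopologicalSpace E] [TopologicalSpace B]
    (p : C(E, B)) : Prop :=
  ∃ s : C(B, E), (p.comp s).Homotopic (ContinuousMap.id B)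

/-- The sectional category of `f : Y → X`: the least `n` such that the `n`-th iterated join
`j^n_f : *^n_X Y → X` admits a homotopy section. -/
def secat (f : C(Y, X)) : ℕ∞ :=
  sInf {n : ℕ∞ | ∃ m : ℕ, n = m ∧ HasHomotopySection (iJoin f m).p}

/-- The relative category of `f : Y → X` (Doeraene–El Haouari): the least `n` such that
`j^n_f` admits a homotopy section `σ` with `σ ∘ f ≃ ι_n`. -/
def relcat (f : C(Y, X)) : ℕ∞ :=
  sInf {n : ℕ∞ | ∃ m : ℕ, n = m ∧ ∃ s : C(X, (iJoin f m).E),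
    ((iJoin f m).p.comp s).Homotopic (ContinuousMap.id X) ∧
    (s.comp f).Homotopic (iotaJoin f m)}

end

/-! If `s` is a homotopy section of `j^n_f`, then `s` followed by the inclusion of the first
factor is a homotopy section of `j^{n+1}_f = j^n_f * f`, and on `f` it is homotopic to the
inclusion `ι_{n+1}` of the second factor: the homotopy `j^n_f ∘ s ∘ f ≃ f` is a family of points
of the homotopy pullback, and the cylinder coordinate of the join slides along it. Together with
the minimality of `secat f` this gives `relcat f ≤ secat f + 1`; the other inequality holds because
a relative section is in particular a section. -/

universe v

variable {A B C D : Type v} [TopologicalSpace A] [TopologicalSpace B] [TopologicalSpace C]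
  [TopologicalSpace D]

def joinInl (α : C(A, C)) (β : C(B, C)) : C(A, JoinSpace α β) where
  toFun a := Quot.mk _ (.inl a)
  continuous_toFun := continuous_quot_mk.comp continuous_inl

def HPullback.ofHomotopy {α : C(A, C)} {β : C(B, C)} {g : C(D, A)} {h : C(D, B)}
    (H : (α.comp g).Homotopy (β.comp h)) : C(D, HPullback α β) where
  toFun d := ⟨(g d, ContinuousMap.curry (H.toContinuousMap.comp .prodSwap) d, h d),
    H.apply_zero d, H.apply_one d⟩
  continuous_toFun := by fun_prop

theorem joinInl_comp_homotopic_joinInr_comp {α : C(A, C)} {β : C(B, C)} {g : C(D, A)}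
    {h : C(D, B)} (hgh : (α.comp g).Homotopic (β.comp h)) :
    ((joinInl α β).comp g).Homotopic ((joinInr α β).comp h) := by
  obtain ⟨H⟩ := hgh
  let Q := HPullback.ofHomotopy H
  exact ⟨{
    toFun := fun q : I × D => (Quot.mk _ (.inr (.inl (Q q.2, q.1))) : JoinSpace α β)
    continuous_toFun := by fun_prop
    map_zero_left := fun d => Quot.sound (CylRel.zero (Q d))
    map_one_left := fun d => Quot.sound (CylRel.one (Q d)) }⟩

theorem HasHomotopySection.exists_section_joinMap {α : C(A, C)} (hα : HasHomotopySection α)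
    (β : C(B, C)) :
    ∃ s : C(C, JoinSpace α β), ((joinMap α β).comp s).Homotopic (ContinuousMap.id C) ∧
      (s.comp β).Homotopic (joinInr α β) := by
  obtain ⟨s, hs⟩ := hα
  exact ⟨(joinInl α β).comp s, hs,
    joinInl_comp_homotopic_joinInr_comp (g := s.comp β) (h := .id B) (hs.comp (.refl β))⟩

theorem ENat.sInf_le_sInf_add_one {S T : Set ℕ∞} (h : ∀ n ∈ S, n + 1 ∈ T) :
    sInf T ≤ sInf S + 1 := by
  rcases S.eq_empty_or_nonempty with rfl | hS
  · simp
  · exact sInf_le (h _ (csInf_mem hS))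

/-- For any map `f : Y → X`, `secat(f) ≤ relcat(f) ≤ secat(f) + 1`. -/
theorem secat_le_relcat_le_secat_add_one {X Y : Type u} [TopologicalSpace X]
    [TopologicalSpace Y] (f : C(Y, X)) :
    secat f ≤ relcat f ∧ relcat f ≤ secat f + 1 := by
  refine ⟨sInf_le_sInf ?_, ENat.sInf_le_sInf_add_one ?_⟩
  · rintro n ⟨m, rfl, s, hs, -⟩
    exact ⟨m, rfl, s, hs⟩
  · rintro n ⟨m, rfl, hm⟩
    exact ⟨m + 1, by push_cast; rfl, hm.exists_section_joinMap f⟩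
end

section
/- For the inclusion f : S¹ ↪ D², secat(f) = 0 and relcat(f) = 1. -/
open ContinuousMap unitInterval

noncomputable section
open Metric

/-- The inclusion of the circle `S¹` into the disc `D²`. -/
def circleInclusion : C(sphere (0 : EuclideanSpace ℝ (Fin 2)) 1,
    closedBall (0 : EuclideanSpace ℝ (Fin 2)) 1) where
  toFun x := ⟨x.1, sphere_subset_closedBall x.2⟩
  continuous_toFun := continuous_subtype_val.subtype_mk _

/-!
The disc is contractible, so a constant map is a homotopy section of `S¹ ↪ D²`: `secat = 0`.
The map `ι₁ : S¹ → S¹ *_{D²} S¹` is nullhomotopic: slide `b` through the cylinder coordinate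
of the point of the homotopy pullback given by the segment from a fixed `a₀` to `b`. A
nullhomotopic map on the sphere extends radially over the ball, which yields a section `σ` of
`j¹` with `σ ∘ f = ι₁`, so `relcat ≤ 1`. Finally `relcat ≠ 0`: a map `s : D² → S¹` with
`s ∘ f ≃ id` would make `S¹` a homotopy retract of a contractible space, hence contractible,
whereas lifting the standard loop along the covering `Circle.exp : ℝ → S¹` shows that `S¹` is
not simply connected.
-/

theorem ContinuousMap.homotopic_of_contractibleSpace {X Y : Type*} [TopologicalSpace X]
    [TopologicalSpace Y] [ContractibleSpace Y] (f g : C(X, Y)) : f.Homotopic g := by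
  obtain ⟨y, hy⟩ := id_nullhomotopic Y
  have hf : f.Homotopic (const X y) := by simpa using hy.comp (Homotopic.refl f)
  have hg : g.Homotopic (const X y) := by simpa using hy.comp (Homotopic.refl g)
  exact hf.trans hg.symm

theorem ContractibleSpace.of_comp_homotopic_id {X Y : Type*} [TopologicalSpace X]
    [TopologicalSpace Y] [ContractibleSpace X] {f : C(Y, X)} {s : C(X, Y)}
    (h : (s.comp f).Homotopic (ContinuousMap.id Y)) : ContractibleSpace Y := by
  obtain ⟨x, hx⟩ := id_nullhomotopic X
  refine (contractible_iff_id_nullhomotopic Y).mpr ⟨s x, h.symm.trans ?_⟩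
  simpa using (Homotopic.refl s).comp (hx.comp (Homotopic.refl f))

theorem IsCoveringMap.not_simplyConnectedSpace {E X : Type*} [TopologicalSpace E]
    [TopologicalSpace X] {p : E → X} (cov : IsCoveringMap p) (Γ : C(I, E))
    (hΓ : Γ 0 ≠ Γ 1) (hp : p (Γ 0) = p (Γ 1)) : ¬ SimplyConnectedSpace X := by
  intro _
  let γ : Path (p (Γ 0)) (p (Γ 0)) :=
    ⟨⟨p ∘ Γ, cov.continuous.comp Γ.continuous⟩, rfl, hp.symm⟩
  have hlift : cov.liftPath γ.toContinuousMap (Γ 0) rfl = Γ :=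
    ((cov.eq_liftPath_iff' rfl).mpr ⟨rfl, rfl⟩).symm
  have hconst : cov.liftPath (Path.refl (p (Γ 0))).toContinuousMap (Γ 0) rfl =
      ContinuousMap.const I (Γ 0) :=
    cov.liftPath_const rfl
  have := cov.liftPath_apply_one_eq_of_homotopicRel
    (SimplyConnectedSpace.paths_homotopic γ (Path.refl _)) (Γ 0) rfl rfl
  rw [hlift, hconst] at this
  exact hΓ this.symm

theorem Circle.not_simplyConnectedSpace : ¬ SimplyConnectedSpace Circle :=
  Circle.isCoveringMap_exp.not_simplyConnectedSpace
    ⟨fun t => 2 * Real.pi * t, by fun_prop⟩ (by simp [Real.pi_ne_zero]) (by simp)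

def LinearIsometryEquiv.sphereHomeomorph {E F : Type*} [NormedAddCommGroup E]
    [NormedAddCommGroup F] [NormedSpace ℝ E] [NormedSpace ℝ F] (e : E ≃ₗᵢ[ℝ] F) (r : ℝ) :
    sphere (0 : E) r ≃ₜ sphere (0 : F) r :=
  e.toHomeomorph.subtype fun x => by simp

theorem not_contractibleSpace_sphere_euclideanSpace_fin_two :
    ¬ ContractibleSpace (sphere (0 : EuclideanSpace ℝ (Fin 2)) 1) := fun _ =>
  Circle.not_simplyConnectedSpace <|
    have : ContractibleSpace Circle :=
      (Complex.orthonormalBasisOneI.repr.sphereHomeomorph 1).contractibleSpace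
    inferInstance

section SphereProj

variable {E : Type*} [NormedAddCommGroup E] [NormedSpace ℝ E]

open scoped Classical in
def sphereProj (y₀ : sphere (0 : E) 1) (v : E) : sphere (0 : E) 1 :=
  if h : v = 0 then y₀ else ⟨‖v‖⁻¹ • v, by simp [norm_smul, h]⟩

theorem sphereProj_of_mem_sphere (y₀ y : sphere (0 : E) 1) : sphereProj y₀ y = y := by
  have hy : (y : E) ≠ 0 := ne_zero_of_mem_unit_sphere y
  ext1
  simp [sphereProj, hy]

theorem continuousAt_sphereProj (y₀ : sphere (0 : E) 1) {v : E} (hv : v ≠ 0) :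
    ContinuousAt (sphereProj y₀) v := by
  rw [Topology.IsInducing.subtypeVal.continuousAt_iff]
  refine ((continuous_norm.continuousAt.inv₀ (norm_ne_zero_iff.mpr hv)).smul
    continuousAt_id).congr ?_
  filter_upwards [isOpen_ne.mem_nhds hv] with w hw
  simp [sphereProj, hw]

end SphereProj

theorem ContinuousMap.Nullhomotopic.exists_comp_inclusion_eq {E Z : Type*}
    [NormedAddCommGroup E] [NormedSpace ℝ E] [TopologicalSpace Z]
    {g : C(sphere (0 : E) 1, Z)} (hg : g.Nullhomotopic) :
    ∃ G : C(closedBall (0 : E) 1, Z), G.comp (.inclusion sphere_subset_closedBall) = g := by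
  obtain ⟨z, ⟨H⟩⟩ := hg
  rcases isEmpty_or_nonempty (sphere (0 : E) 1) with hE | ⟨⟨y₀⟩⟩
  · exact ⟨.const _ z, ext isEmptyElim⟩
  let radius (v : E) : I := Set.projIcc 0 1 zero_le_one (2 - 2 * ‖v‖)
  have hradius : Continuous radius := by fun_prop
  -- `G` is constant on the ball of radius `1 / 2`, so the junk value of `sphereProj` at `0`
  -- does not matter.
  let G (v : closedBall (0 : E) 1) : Z := H (radius v, sphereProj y₀ v)
  have hG : Continuous G := by
    refine continuous_iff_continuousAt.mpr fun v => ?_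
    by_cases hv : (v : E) = 0
    · refine (continuousAt_const : ContinuousAt (fun _ => z) v).congr ?_
      have hsmall : {w : closedBall (0 : E) 1 | ‖(w : E)‖ < 1 / 2} ∈ nhds v :=
        (isOpen_lt (continuous_norm.comp continuous_subtype_val) continuous_const).mem_nhds
          (by simp [hv])
      filter_upwards [hsmall] with w hw
      have : radius w = 1 :=
        Set.projIcc_of_right_le _ (by linarith [show ‖(w : E)‖ < 1 / 2 from hw])
      simp [G, this]
    · exact H.continuous.continuousAt.comp
        ((hradius.comp continuous_subtype_val).continuousAt.prodMk
          ((continuousAt_sphereProj y₀ hv).comp continuous_subtype_val.continuousAt))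
  refine ⟨⟨G, hG⟩, ext fun y => ?_⟩
  have : radius y = 0 :=
    Set.projIcc_of_le_left _ (by rw [norm_eq_of_mem_sphere y]; norm_num)
  change H (radius y, sphereProj y₀ y) = g y
  rw [this, sphereProj_of_mem_sphere, H.apply_zero]

theorem joinInr_nullhomotopic {A B C : Type u} [TopologicalSpace A] [TopologicalSpace B]
    [TopologicalSpace C] {α : C(A, C)} {β : C(B, C)} {a₀ : A}
    (F : (ContinuousMap.const B (α a₀)).Homotopy β) : (joinInr α β).Nullhomotopic := by
  let path : C(B, HPullback α β) :=
    ⟨fun b => ⟨(a₀, (F.toContinuousMap.comp .prodSwap).curry b, b), F.apply_zero b,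
      F.apply_one b⟩, by fun_prop⟩
  refine ⟨Quot.mk _ (.inl a₀), ⟨
    { toFun := fun q => Quot.mk _ (.inr (.inl (path q.2, σ q.1)))
      continuous_toFun := by fun_prop
      map_zero_left := fun b => ?_
      map_one_left := fun b => ?_ }⟩⟩
  · change Quot.mk _ (Sum.inr (Sum.inl (path b, σ 0))) = _
    rw [symm_zero]
    exact Quot.sound (CylRel.one (path b))
  · change Quot.mk _ (Sum.inr (Sum.inl (path b, σ 1))) = _
    rw [symm_one]
    exact Quot.sound (CylRel.zero (path b))

theorem one_le_relcat {X Y : Type u} [TopologicalSpace X] [TopologicalSpace Y] {f : C(Y, X)}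
    (h : ∀ s : C(X, Y), ¬ (s.comp f).Homotopic (ContinuousMap.id Y)) : 1 ≤ relcat f := by
  refine le_sInf ?_
  rintro _ ⟨_ | m, rfl, s, -, hs⟩
  · exact (h s hs).elim
  · exact_mod_cast m.succ_pos

/-- For the inclusion `f : S¹ ↪ D²`, `secat(f) = 0` and `relcat(f) = 1`. -/
theorem secat_circleInclusion_eq_zero_and_relcat_eq_one :
    secat circleInclusion = 0 ∧ relcat circleInclusion = 1 := by
  have : ContractibleSpace (closedBall (0 : EuclideanSpace ℝ (Fin 2)) 1) :=
    contractibleSpace_closedBall zero_le_one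
  let y₀ : sphere (0 : EuclideanSpace ℝ (Fin 2)) 1 := ⟨EuclideanSpace.single 0 1, by simp⟩
  refine ⟨nonpos_iff_eq_zero.mp (sInf_le ⟨0, rfl, .const _ y₀,
    homotopic_of_contractibleSpace _ _⟩), le_antisymm ?_ ?_⟩
  · obtain ⟨s, hs⟩ := (joinInr_nullhomotopic
      (homotopic_of_contractibleSpace (.const _ (circleInclusion y₀)) circleInclusion).some
      ).exists_comp_inclusion_eq
    exact sInf_le ⟨1, rfl, s, homotopic_of_contractibleSpace _ _, hs ▸ .refl _⟩
  · exact one_le_relcat fun s hs =>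
      not_contractibleSpace_sphere_euclideanSpace_fin_two (.of_comp_homotopic_id hs)
end
end

section
/- Let π : E → B be a fibration with a strict section σ : B → E, let u : X → B be a map and û : X → E a strict lift of u (π ∘ û = u). If σ ∘ u is homotopic to û, then σ ∘ u is fibrewise homotopic to û over B. -/
/-! `sec ∘ p ∘ G` and `G` lift the same homotopy `p ∘ G` and both start at `sec ∘ u`. Lifting a
contraction, relative to the ends of `I`, of the base loop `(p ∘ G)⁻¹ · (p ∘ G)`, starting from
`(sec ∘ p ∘ G)⁻¹ · G`, and going round the other three sides of the lifted square gives a fibrewise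
homotopy from `sec ∘ u` to `uhat`. -/

open ContinuousMap unitInterval

noncomputable section

universe u

/-- A (Hurewicz) fibration: a map with the homotopy lifting property with respect to
all spaces. -/
def IsFibration {E B : Type u} [TopologicalSpace E] [TopologicalSpace B]
    (p : C(E, B)) : Prop :=
  ∀ (Z : Type u) [TopologicalSpace Z] (h : C(Z × I, B)) (h₀ : C(Z, E)),
    (∀ z, p (h₀ z) = h (z, 0)) →
    ∃ H : C(Z × I, E), (∀ z, H (z, 0) = h₀ z) ∧ ∀ zt, p (H zt) = h zt

/-- Two maps `g h : X → E` lying over the same map to `B` are fibrewise homotopic over `B`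
if there is a homotopy from `g` to `h` which, at every time, still lies over that map. -/
def FibrewiseHomotopic {E B X : Type u} [TopologicalSpace E] [TopologicalSpace B]
    [TopologicalSpace X] (p : C(E, B)) (g h : C(X, E)) : Prop :=
  ∃ H : g.Homotopy h, ∀ (t : I) (x : X), p (H (t, x)) = p (g x)

/-- The tent map `t ↦ |2t - 1|`: the base path of `K.symm.trans L` when `K` and `L` lie over
the same homotopy. -/
def unitInterval.tent (t : I) : I :=
  ⟨|2 * (t : ℝ) - 1|, abs_nonneg _, abs_le.2 ⟨by linarith [t.2.1], by linarith [t.2.2]⟩⟩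

@[fun_prop]
theorem unitInterval.continuous_tent : Continuous tent :=
  (by fun_prop : Continuous fun t : I => |2 * (t : ℝ) - 1|).subtype_mk _

@[simp]
theorem unitInterval.tent_zero : tent 0 = 1 := by
  ext; norm_num [tent]

@[simp]
theorem unitInterval.tent_one : tent 1 = 1 := by
  ext; norm_num [tent]

section

variable {E B X : Type u} [TopologicalSpace E] [TopologicalSpace B] [TopologicalSpace X]
  {p : C(E, B)}

theorem fibrewiseHomotopic_of_vertical {f g : C(X, E)} (W : C(I × X, E))
    (h₀ : ∀ x, W (0, x) = f x) (h₁ : ∀ x, W (1, x) = g x) (hW : ∀ t x, p (W (t, x)) = p (f x)) :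
    FibrewiseHomotopic p f g :=
  ⟨⟨W, h₀, h₁⟩, hW⟩

theorem FibrewiseHomotopic.proj_eq {f g : C(X, E)} (h : FibrewiseHomotopic p f g) (x : X) :
    p (f x) = p (g x) := by
  obtain ⟨H, hH⟩ := h
  simpa using (hH 1 x).symm

theorem FibrewiseHomotopic.symm {f g : C(X, E)} (h : FibrewiseHomotopic p f g) :
    FibrewiseHomotopic p g f := by
  obtain ⟨H, hH⟩ := id h
  exact ⟨H.symm, fun t x => by rw [Homotopy.symm_apply, hH, h.proj_eq]⟩

theorem FibrewiseHomotopic.trans {f g k : C(X, E)} (hfg : FibrewiseHomotopic p f g)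
    (hgk : FibrewiseHomotopic p g k) : FibrewiseHomotopic p f k := by
  obtain ⟨F, hF⟩ := id hfg
  obtain ⟨G, hG⟩ := hgk
  refine ⟨F.trans G, fun t x => ?_⟩
  rw [Homotopy.trans_apply]
  split_ifs
  · exact hF _ _
  · rw [hG, hfg.proj_eq]

/-- `Φ` is a homotopy, relative to the ends of `I`, from `p ∘ F` to the constant homotopy; lifting
it from `F`, the other three sides of the lifted square are vertical. -/
theorem IsFibration.fibrewiseHomotopic_of_proj_homotopic_const (hp : IsFibration p)
    {f g : C(X, E)} (F : f.Homotopy g) (Φ : C((I × X) × I, B))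
    (hΦ₀ : ∀ z, Φ (z, 0) = p (F z)) (hΦ_left : ∀ x s, Φ ((0, x), s) = p (f x))
    (hΦ_right : ∀ x s, Φ ((1, x), s) = p (g x)) (hΦ_top : ∀ t x, Φ ((t, x), 1) = p (f x)) :
    FibrewiseHomotopic p f g := by
  obtain ⟨W, hW₀, hWp⟩ := hp (I × X) Φ F.toContinuousMap fun z => (hΦ₀ z).symm
  let e₀ : C(X, E) := ⟨fun x => W ((0, x), 1), by fun_prop⟩
  let e₁ : C(X, E) := ⟨fun x => W ((1, x), 1), by fun_prop⟩
  have left : FibrewiseHomotopic p f e₀ :=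
    fibrewiseHomotopic_of_vertical ⟨fun q => W ((0, q.2), q.1), by fun_prop⟩
      (fun x => by simp [hW₀]) (fun _ => rfl) (fun s x => by simp [hWp, hΦ_left])
  have top : FibrewiseHomotopic p e₀ e₁ :=
    fibrewiseHomotopic_of_vertical ⟨fun q => W (q, 1), by fun_prop⟩
      (fun _ => rfl) (fun _ => rfl) (fun t x => by simp [e₀, hWp, hΦ_top])
  have right : FibrewiseHomotopic p g e₁ :=
    fibrewiseHomotopic_of_vertical ⟨fun q => W ((1, q.2), q.1), by fun_prop⟩
      (fun x => by simp [hW₀]) (fun _ => rfl) (fun s x => by simp [hWp, hΦ_right])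
  exact left.trans (top.trans right.symm)

theorem ContinuousMap.Homotopy.proj_symm_trans_apply {a b c : C(X, E)} (K : a.Homotopy b)
    (L : a.Homotopy c) (hKL : ∀ z, p (K z) = p (L z)) (t : I) (x : X) :
    p (K.symm.trans L (t, x)) = p (L (tent t, x)) := by
  rw [Homotopy.trans_apply]
  split_ifs with ht
  · rw [Homotopy.symm_apply, hKL]
    congr 3
    ext
    simp [tent, abs_of_nonpos (by linarith : 2 * (t : ℝ) - 1 ≤ 0)]
  · congr 3
    ext
    simp [tent, abs_of_nonneg (by linarith : 0 ≤ 2 * (t : ℝ) - 1)]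

theorem IsFibration.fibrewiseHomotopic_of_homotopy_lifts (hp : IsFibration p)
    {a b c : C(X, E)} (K : a.Homotopy b) (L : a.Homotopy c) (hKL : ∀ z, p (K z) = p (L z)) :
    FibrewiseHomotopic p b c := by
  refine hp.fibrewiseHomotopic_of_proj_homotopic_const (K.symm.trans L)
    ⟨fun q => p (L (max (tent q.1.1) q.2, q.1.2)), by fun_prop⟩ ?_ ?_ ?_ ?_
  · rintro ⟨t, x⟩
    simp [K.proj_symm_trans_apply L hKL]
  · intro x s
    simp [← hKL, le_one']
  · intro x s
    simp [le_one']
  · intro t x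
    simp [← hKL, le_one']

end

/-- Harper's lemma: if `π : E → B` is a fibration with a strict section `sec`,
`u : X → B` a map and `uhat : X → E` a strict lift of `u`, and if `sec ∘ u` is homotopic to `uhat`,
then `sec ∘ u` is fibrewise homotopic to `uhat` over `B`. -/
theorem harper_fibrewise_homotopy {E B X : Type u} [TopologicalSpace E] [TopologicalSpace B]
    [TopologicalSpace X] (p : C(E, B)) (hp : IsFibration p)
    (sec : C(B, E)) (hsec : p.comp sec = ContinuousMap.id B)
    (u : C(X, B)) (uhat : C(X, E)) (hlift : p.comp uhat = u)
    (h : (sec.comp u).Homotopic uhat) :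
    FibrewiseHomotopic p (sec.comp u) uhat := by
  obtain ⟨G⟩ := h
  have hpsec : ∀ b, p (sec b) = b := ContinuousMap.congr_fun hsec
  let K : (sec.comp u).Homotopy (sec.comp u) :=
    ((ContinuousMap.Homotopy.refl (sec.comp p)).comp G).cast
      (by ext; simp [hpsec]) (by ext; simp [← hlift])
  exact hp.fibrewiseHomotopic_of_homotopy_lifts K G fun z => hpsec (p (G z))

end
end
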